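/- Let U_b^N be the set of lattices L ⊆ K^m such that L_0 ⊆ L, dim_ℂ L/L_0 = N, and π_b restricts to a bijection L → L_b. Then every L ∈ U_b^N has the form L = (1 + f)(L_b) for a unique ℂ-linear map f : L_b → L_b^− with L_0 ⊆ ker f. Moreover, writing f(u) = Σ_{k≥1} z^{−k} · ι(f_k(ū)) for linear maps f_k : D → V_b (where ū ∈ D is the class of u ∈ L_b, ι : V_b ↪ K^m is the inclusion, and z^{−k}· denotes multiplication by z^{−k} in K^m), one has: (i) f_k = f_1 ∘ (z̄ + f̂_1)^{k−1} for all k ≥ 1; (ii) the operator z̄ + f̂_1 ∈ End(D) is nilpotent; and (iii) the isomorphism induced by π_b intertwines the operator induced by multiplication by z on L/L_0 with the operator z̄ + f̂_1 on L_b/L_0 = D. -/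

import Mathlib

set_option synthInstance.maxHeartbeats 400000
set_option maxHeartbeats 1000000

namespace GrassA

noncomputable section

/-- `K = ℂ((z))`, the field of formal Laurent series. -/
abbrev K : Type := LaurentSeries ℂ

/-- `z ∈ K`. -/
def zK : K := HahnSeries.single (1 : ℤ) (1 : ℂ)

variable (m : ℕ) (b : Fin m → ℕ)

/-- `K^m`. -/
abbrev Km : Type := Fin m → K

/-- `L_0 = O^m ⊆ K^m`: vectors whose coordinates are power series. -/
def L0 : Submodule ℂ (Km m) where
  carrier := {v | ∀ (i : Fin m) (d : ℤ), d < 0 → (v i).coeff d = 0}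
  add_mem' := by
    intro u v hu hv i d hd
    simp [HahnSeries.coeff_add, hu i d hd, hv i d hd]
  zero_mem' := by intro i d _; rfl
  smul_mem' := by
    intro r v hv i d hd
    simp [HahnSeries.coeff_smul, hv i d hd]

/-- `L_b = ⊕_i O·z^{−b_i} e_i ⊆ K^m`: vectors whose `i`-th coordinate lies in
`z^{−b_i}·O`. -/
def Lb : Submodule ℂ (Km m) where
  carrier := {v | ∀ (i : Fin m) (d : ℤ), d < -(b i : ℤ) → (v i).coeff d = 0}
  add_mem' := by
    intro u v hu hv i d hd
    simp [HahnSeries.coeff_add, hu i d hd, hv i d hd]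
  zero_mem' := by intro i d _; rfl
  smul_mem' := by
    intro r v hv i d hd
    simp [HahnSeries.coeff_smul, hv i d hd]

/-- `V_b ⊆ K^m`: the `ℂ`-span of `z^{−b_1}e_1, …, z^{−b_m}e_m`, i.e. vectors whose `i`-th
coordinate is a scalar multiple of `z^{−b_i}`. -/
def Vb : Submodule ℂ (Km m) where
  carrier := {v | ∀ (i : Fin m) (d : ℤ), d ≠ -(b i : ℤ) → (v i).coeff d = 0}
  add_mem' := by
    intro u v hu hv i d hd
    simp [HahnSeries.coeff_add, hu i d hd, hv i d hd]
  zero_mem' := by intro i d _; rfl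
  smul_mem' := by
    intro r v hv i d hd
    simp [HahnSeries.coeff_smul, hv i d hd]

/-- `L_b^− ⊆ K^m`: vectors whose `i`-th coordinate lies in `z^{−b_i−1}·ℂ[z^{−1}]`. -/
def Lbminus : Submodule ℂ (Km m) where
  carrier := {v | ∀ (i : Fin m) (d : ℤ), -(b i : ℤ) ≤ d → (v i).coeff d = 0}
  add_mem' := by
    intro u v hu hv i d hd
    simp [HahnSeries.coeff_add, hu i d hd, hv i d hd]
  zero_mem' := by intro i d _; rfl
  smul_mem' := by
    intro r v hv i d hd
    simp [HahnSeries.coeff_smul, hv i d hd]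

/-- Truncation of a Laurent series to degrees `≥ c`. -/
def trunc (c : ℤ) (f : K) : K where
  coeff := fun d => if c ≤ d then f.coeff d else 0
  isPWO_support' := f.isPWO_support'.mono (by
    intro d hd
    simp only [Function.mem_support] at hd ⊢
    intro h0
    apply hd
    rw [h0]
    simp)

/-- The projection `π_b : K^m → L_b` along `L_b^−` (coordinate-wise truncation to degrees
`≥ −b_i`). -/
def pib : Km m →ₗ[ℂ] Km m where
  toFun := fun v i => trunc (-(b i : ℤ)) (v i)
  map_add' := by
    intro u v
    funext i
    ext d
    by_cases h : -(b i : ℤ) ≤ d <;>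
      simp [trunc, HahnSeries.coeff_add, h]
  map_smul' := by
    intro r v
    funext i
    ext d
    by_cases h : -(b i : ℤ) ≤ d <;>
      simp [trunc, HahnSeries.coeff_smul, h]

lemma zK_mul_coeff (g : K) (d : ℤ) : (zK * g).coeff d = g.coeff (d - 1) := by
  have : (zK * g).coeff ((d - 1) + 1) = (1 : ℂ) * g.coeff (d - 1) :=
    HahnSeries.coeff_single_mul_add
  simpa using this

/-- Multiplication by `z` as a `ℂ`-linear endomorphism of `K^m`. -/
def zMul : Km m →ₗ[ℂ] Km m where
  toFun v := zK • v
  map_add' u v := by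
    funext i
    simp only [Pi.smul_apply, Pi.add_apply, smul_eq_mul]
    ring
  map_smul' r v := by
    funext i
    ext d
    simp only [Pi.smul_apply, RingHom.id_apply, smul_eq_mul, zK_mul_coeff,
      HahnSeries.coeff_smul]

/-- A concrete model for `D = L_b/L_0`: the coordinates are indexed by the basis vectors
`z^{−(k+1)} e_i` (`i : Fin m`, `k : Fin (b i)`). -/
abbrev Dspace : Type := ((i : Fin m) × Fin (b i)) → ℂ

/-- The map `K^m → D` reading off the coefficients in the window `−b_i ≤ d ≤ −1` of each
coordinate.  On `L_b` it is the quotient map `L_b → L_b/L_0 = D`; in general it sends `v`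
to the class of `π_b(v)`. -/
def toD : Km m →ₗ[ℂ] Dspace m b where
  toFun := fun v p => (v p.1).coeff (-(p.2 : ℤ) - 1)
  map_add' := by
    intro u v
    funext p
    simp [HahnSeries.coeff_add]
  map_smul' := by
    intro r v
    funext p
    simp [HahnSeries.coeff_smul]

/-- The endomorphism `z̄` of `D = L_b/L_0` induced by multiplication by `z`. -/
def zbar : Module.End ℂ (Dspace m b) where
  toFun := fun u p => if h : (p.2 : ℕ) + 1 < b p.1 then u ⟨p.1, ⟨(p.2 : ℕ) + 1, h⟩⟩ else 0
  map_add' := by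
    intro u v
    funext p
    by_cases h : (p.2 : ℕ) + 1 < b p.1 <;> simp [h]
  map_smul' := by
    intro r v
    funext p
    by_cases h : (p.2 : ℕ) + 1 < b p.1 <;> simp [h]

/-- `f̂_1 : D → D`, induced by a linear map `f_1 : D → V_b ⊆ K^m` (composition of `f_1`
with the identification of `V_b` with a subspace of `D`, implemented by `toD`). -/
def fhat (f1 : Dspace m b →ₗ[ℂ] Km m) : Module.End ℂ (Dspace m b) :=
  (toD m b) ∘ₗ f1

/-!
Since `π_b : L → L_b` is bijective and fixes `L_0 ⊆ L`, the map `u ↦ (π_b|_L)⁻¹ u - u` takes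
values in `L_b^−` and kills `L_0`, so `L` is its graph over `L_b`, and such a graph determines the
map. Every `v ∈ L` is then `π_b v + F v̄`. Applied to `z v` this shows that
`v̄ ↦ (z v)‾` is `z̄ + f̂_1`, and applied to `z` times the point of `L` over `w ∈ D` it gives
`F ((z̄ + f̂_1) w) = z F w - f_1 w`, whose coefficients are the recursion
`f_{k+1} = f_k ∘ (z̄ + f̂_1)`. Nilpotency comes from `z^r L ⊆ L_0`.
-/

theorem exists_linearMap_rightInverse_of_bijOn {R V W : Type*} [Semiring R] [AddCommMonoid V]
    [Module R V] [AddCommMonoid W] [Module R W] {f : V →ₗ[R] W} {L : Submodule R V}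
    {M : Submodule R W} (h : Set.BijOn f L M) : ∃ g : M →ₗ[R] L, ∀ x, f (g x) = x := by
  let P : L →ₗ[R] M := f.restrict fun _ hv => h.mapsTo hv
  let e := LinearEquiv.ofBijective P h.bijective
  exact ⟨e.symm, fun x => congrArg Subtype.val (e.apply_symm_apply x)⟩

section Coefficients

variable {m b}

lemma pib_coeff (v : Km m) (i : Fin m) (d : ℤ) :
    (pib m b v i).coeff d = if -(b i : ℤ) ≤ d then (v i).coeff d else 0 := rfl

lemma toD_apply (v : Km m) (p : (i : Fin m) × Fin (b i)) :
    toD m b v p = (v p.1).coeff (-(p.2 : ℤ) - 1) := rfl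

lemma zMul_coeff (v : Km m) (i : Fin m) (d : ℤ) :
    (zMul m v i).coeff d = (v i).coeff (d - 1) :=
  zK_mul_coeff (v i) d

lemma L0_le_Lb : L0 m ≤ Lb m b :=
  fun _ hv i d hd => hv i d (by omega)

lemma pib_mem_Lb (v : Km m) : pib m b v ∈ Lb m b := by
  intro i d hd
  rw [pib_coeff, if_neg (by omega)]

lemma pib_eq_self {v : Km m} (hv : v ∈ Lb m b) : pib m b v = v := by
  funext i; ext d
  rw [pib_coeff]
  split_ifs with h
  · rfl
  · exact (hv i d (by omega)).symm

lemma pib_eq_zero_iff {v : Km m} : pib m b v = 0 ↔ v ∈ Lbminus m b := by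
  constructor
  · intro h i d hd
    simpa [pib_coeff, hd] using congrArg (HahnSeries.coeff · d) (congrFun h i)
  · intro h
    funext i; ext d
    rw [pib_coeff]
    split_ifs with hd
    · exact h i d hd
    · rfl

lemma toD_pib (v : Km m) : toD m b (pib m b v) = toD m b v := by
  funext p
  rw [toD_apply, toD_apply, pib_coeff, if_pos (by have := p.2.2; omega)]

lemma toD_eq_zero_of_mem_Lbminus {v : Km m} (h : v ∈ Lbminus m b) : toD m b v = 0 := by
  funext p
  exact h p.1 _ (by have := p.2.2; omega)

lemma toD_eq_zero_of_mem_L0 {v : Km m} (h : v ∈ L0 m) : toD m b v = 0 := by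
  funext p
  exact h p.1 _ (by omega)

lemma mem_L0_of_mem_Lb_of_toD_eq_zero {v : Km m} (hv : v ∈ Lb m b)
    (h : toD m b v = 0) : v ∈ L0 m := by
  intro i d hd
  by_cases hbd : d < -(b i : ℤ)
  · exact hv i d hbd
  · have hk : (-d - 1).toNat < b i := by omega
    have := congrFun h ⟨i, ⟨(-d - 1).toNat, hk⟩⟩
    rwa [toD_apply, show -(((-d - 1).toNat : ℕ) : ℤ) - 1 = d by omega] at this

lemma zMul_mem_Lb {u : Km m} (hu : u ∈ Lb m b) : zMul m u ∈ Lb m b := by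
  intro i d hd
  rw [zMul_coeff]
  exact hu i (d - 1) (by omega)

lemma toD_zMul_of_mem_Lb {u : Km m} (hu : u ∈ Lb m b) :
    toD m b (zMul m u) = zbar m b (toD m b u) := by
  funext p
  show _ = if h : (p.2 : ℕ) + 1 < b p.1 then toD m b u ⟨p.1, ⟨(p.2 : ℕ) + 1, h⟩⟩ else 0
  rw [toD_apply, zMul_coeff]
  split_ifs with h
  · rw [toD_apply]
    congr 1
    push_cast
    ring
  · exact hu p.1 _ (by omega)

lemma zMul_pow_apply (n : ℕ) (v : Km m) : (zMul m ^ n) v = zK ^ n • v := by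
  induction n generalizing v with
  | zero => simp
  | succ n ih =>
    rw [pow_succ, Module.End.mul_apply, ih, pow_succ]
    funext i
    exact (mul_assoc _ _ _).symm

lemma Vb_ext {x y : Km m} (hx : x ∈ Vb m b) (hy : y ∈ Vb m b)
    (h : ∀ i : Fin m, (x i).coeff (-(b i : ℤ)) = (y i).coeff (-(b i : ℤ))) : x = y := by
  funext i; ext d
  by_cases hd : d = -(b i : ℤ)
  · rw [hd]; exact h i
  · rw [hx i d hd, hy i d hd]

end Coefficients

section Splitting

variable {m b}

/-- The splitting `w ↦ Σ w_{i,k} z^{-(k+1)} e_i` of `toD : L_b → D`. -/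
def sec : Dspace m b →ₗ[ℂ] Km m where
  toFun w i :=
    { coeff := fun d =>
        if h : 0 ≤ -d - 1 ∧ (-d - 1).toNat < b i then w ⟨i, ⟨(-d - 1).toNat, h.2⟩⟩ else 0
      isPWO_support' := (Set.finite_Icc (-(b i : ℤ)) (-1)).isPWO.mono fun d hd => by
        by_contra hmem
        exact hd (dif_neg fun h => hmem (Set.mem_Icc.mpr (by omega))) }
  map_add' u v := by
    funext i; ext d
    simp only [Pi.add_apply, HahnSeries.coeff_add]
    split_ifs <;> simp
  map_smul' r v := by
    funext i; ext d
    simp only [Pi.smul_apply, HahnSeries.coeff_smul, RingHom.id_apply]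
    split_ifs <;> simp

lemma sec_coeff (w : Dspace m b) (i : Fin m) (d : ℤ) :
    ((sec w) i).coeff d =
      if h : 0 ≤ -d - 1 ∧ (-d - 1).toNat < b i then w ⟨i, ⟨(-d - 1).toNat, h.2⟩⟩ else 0 := rfl

lemma sec_mem_Lb (w : Dspace m b) : sec w ∈ Lb m b := by
  intro i d hd
  rw [sec_coeff, dif_neg (by omega)]

lemma toD_sec (w : Dspace m b) : toD m b (sec w) = w := by
  funext ⟨i, k⟩
  have hk : k.val < b i := k.2
  rw [toD_apply, sec_coeff, dif_pos (by omega)]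
  congr
  dsimp only
  omega

lemma sub_sec_toD_mem_L0 {u : Km m} (hu : u ∈ Lb m b) : u - sec (toD m b u) ∈ L0 m := by
  intro i d hd
  rw [Pi.sub_apply, HahnSeries.coeff_sub, sec_coeff]
  split_ifs with h
  · rw [toD_apply, show -((((-d - 1).toNat : ℕ)) : ℤ) - 1 = d by omega, sub_self]
  · rw [hu i d (by omega), sub_zero]

end Splitting

section Graph

variable {m b}

/-- The lattice `(1 + f)(L_b)` attached to `f = F ∘ toD`. -/
def graph (F : Dspace m b →ₗ[ℂ] Km m) : Set (Km m) :=
  (fun u => u + F (toD m b u)) '' (Lb m b : Set (Km m))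

lemma pib_add_of_mem_Lbminus {u x : Km m} (hu : u ∈ Lb m b) (hx : x ∈ Lbminus m b) :
    pib m b (u + x) = u := by
  rw [map_add, pib_eq_self hu, pib_eq_zero_iff.mpr hx, add_zero]

lemma toD_add_of_mem_Lbminus (u : Km m) {x : Km m} (hx : x ∈ Lbminus m b) :
    toD m b (u + x) = toD m b u := by
  rw [map_add, toD_eq_zero_of_mem_Lbminus hx, add_zero]

lemma sec_add_mem_graph (F : Dspace m b →ₗ[ℂ] Km m) (w : Dspace m b) :
    sec w + F w ∈ graph F :=
  ⟨sec w, sec_mem_Lb w, congrArg (fun x => sec w + F x) (toD_sec w)⟩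

lemma graph_injective {F F' : Dspace m b →ₗ[ℂ] Km m} (hF : ∀ w, F w ∈ Lbminus m b)
    (hF' : ∀ w, F' w ∈ Lbminus m b) (h : graph F = graph F') : F = F' := by
  refine LinearMap.ext fun w => ?_
  obtain ⟨u, hu, he⟩ : sec w + F w ∈ graph F' := h ▸ sec_add_mem_graph F w
  have hu_eq : u = sec w := by
    simpa only [pib_add_of_mem_Lbminus hu (hF' _), pib_add_of_mem_Lbminus (sec_mem_Lb w) (hF w)]
      using congrArg (pib m b) he
  subst hu_eq
  simp only [toD_sec, add_right_inj] at he
  exact he.symm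

lemma exists_graph_eq {L : Submodule ℂ (Km m)} (hL0L : L0 m ≤ L)
    (hbij : Set.BijOn (pib m b) (L : Set (Km m)) (Lb m b : Set (Km m))) :
    ∃ F : Dspace m b →ₗ[ℂ] Km m, (∀ w, F w ∈ Lbminus m b) ∧ (L : Set (Km m)) = graph F := by
  obtain ⟨g, hg⟩ := exists_linearMap_rightInverse_of_bijOn hbij
  set s : Dspace m b →ₗ[ℂ] L := g ∘ₗ sec.codRestrict (Lb m b) sec_mem_Lb
  have hs : ∀ w, pib m b (s w) = sec w := fun w => hg _
  refine ⟨L.subtype ∘ₗ s - sec, fun w => ?_, ?_⟩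
  · rw [← pib_eq_zero_iff, LinearMap.sub_apply, map_sub, LinearMap.comp_apply,
      Submodule.subtype_apply, hs, pib_eq_self (sec_mem_Lb w), sub_self]
  ext v
  constructor
  · intro hv
    refine ⟨pib m b v, pib_mem_Lb v, ?_⟩
    show pib m b v + (s (toD m b (pib m b v)) - sec (toD m b (pib m b v))) = v
    have hL0 : pib m b v - sec (toD m b v) ∈ L := by
      simpa only [toD_pib] using hL0L (sub_sec_toD_mem_L0 (pib_mem_Lb v))
    have key : v - s (toD m b v) = pib m b v - sec (toD m b v) :=
      hbij.injOn (L.sub_mem hv (s _).2) hL0 (by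
        rw [map_sub, map_sub, hs, pib_eq_self (pib_mem_Lb v), pib_eq_self (sec_mem_Lb _)])
    rw [toD_pib]
    linear_combination -key
  · rintro ⟨u, hu, rfl⟩
    show u + (s (toD m b u) - sec (toD m b u)) ∈ L
    rw [add_sub_left_comm]
    exact L.add_mem (s _).2 (hL0L (sub_sec_toD_mem_L0 hu))

end Graph

section Lattice

variable {m b} {L : Submodule ℂ (Km m)} {F : Dspace m b →ₗ[ℂ] Km m}

lemma pib_add_toD_of_mem (hF : ∀ w, F w ∈ Lbminus m b) (hL : (L : Set (Km m)) = graph F)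
    {v : Km m} (hv : v ∈ L) : pib m b v + F (toD m b v) = v := by
  obtain ⟨u, hu, rfl⟩ : v ∈ graph F := hL ▸ hv
  rw [pib_add_of_mem_Lbminus hu (hF _), toD_add_of_mem_Lbminus u (hF _)]

lemma exists_mem_toD_eq (hF : ∀ w, F w ∈ Lbminus m b) (hL : (L : Set (Km m)) = graph F)
    (w : Dspace m b) : ∃ v ∈ L, toD m b v = w :=
  ⟨sec w + F w, show _ ∈ (L : Set (Km m)) from hL ▸ sec_add_mem_graph F w, by rw [toD_add_of_mem_Lbminus _ (hF w), toD_sec]⟩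

lemma mem_L0_of_toD_eq_zero (hF : ∀ w, F w ∈ Lbminus m b) (hL : (L : Set (Km m)) = graph F)
    {v : Km m} (hv : v ∈ L) (h : toD m b v = 0) : v ∈ L0 m := by
  rw [← pib_add_toD_of_mem hF hL hv, h, map_zero, add_zero]
  exact mem_L0_of_mem_Lb_of_toD_eq_zero (pib_mem_Lb v) (by rwa [toD_pib])

variable {f1 : Dspace m b →ₗ[ℂ] Km m}

lemma toD_zMul_of_mem (hF : ∀ w, F w ∈ Lbminus m b) (hL : (L : Set (Km m)) = graph F)
    (h1 : ∀ w, pib m b (zMul m (F w)) = f1 w) {v : Km m} (hv : v ∈ L) :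
    toD m b (zMul m v) = (zbar m b + fhat m b f1) (toD m b v) := by
  conv_lhs => rw [← pib_add_toD_of_mem hF hL hv]
  rw [map_add, map_add, toD_zMul_of_mem_Lb (pib_mem_Lb v), toD_pib, ← toD_pib (zMul m _), h1]
  rfl

lemma toD_zMul_pow_of_mem (hF : ∀ w, F w ∈ Lbminus m b) (hL : (L : Set (Km m)) = graph F)
    (h1 : ∀ w, pib m b (zMul m (F w)) = f1 w) (hLz : ∀ v ∈ L, zMul m v ∈ L) (n : ℕ)
    {v : Km m} (hv : v ∈ L) :
    toD m b ((zMul m ^ n) v) = ((zbar m b + fhat m b f1) ^ n) (toD m b v) := by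
  induction n generalizing v with
  | zero => rfl
  | succ n ih =>
    rw [pow_succ, Module.End.mul_apply, ih (hLz v hv), toD_zMul_of_mem hF hL h1 hv, pow_succ,
      Module.End.mul_apply]

lemma isNilpotent_zbar_add_fhat (hF : ∀ w, F w ∈ Lbminus m b)
    (hL : (L : Set (Km m)) = graph F) (h1 : ∀ w, pib m b (zMul m (F w)) = f1 w)
    (hLz : ∀ v ∈ L, zMul m v ∈ L) {r : ℕ} (hr : ∀ v ∈ L, zK ^ r • v ∈ L0 m) :
    IsNilpotent (zbar m b + fhat m b f1) := by
  refine ⟨r, LinearMap.ext fun w => ?_⟩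
  obtain ⟨v, hv, rfl⟩ := exists_mem_toD_eq hF hL w
  rw [← toD_zMul_pow_of_mem hF hL h1 hLz r hv, zMul_pow_apply, toD_eq_zero_of_mem_L0 (hr v hv)]
  rfl

lemma apply_zbar_add_fhat (hF : ∀ w, F w ∈ Lbminus m b) (hL : (L : Set (Km m)) = graph F)
    (h1 : ∀ w, pib m b (zMul m (F w)) = f1 w) (hLz : ∀ v ∈ L, zMul m v ∈ L) (w : Dspace m b) :
    F ((zbar m b + fhat m b f1) w) = zMul m (F w) - f1 w := by
  have hv : sec w + F w ∈ (L : Set (Km m)) := hL ▸ sec_add_mem_graph F w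
  have hw : toD m b (sec w + F w) = w := by rw [toD_add_of_mem_Lbminus _ (hF w), toD_sec]
  have h := pib_add_toD_of_mem hF hL (hLz _ hv)
  rw [toD_zMul_of_mem hF hL h1 hv, hw, map_add, map_add,
    pib_eq_self (zMul_mem_Lb (sec_mem_Lb w)), h1] at h
  linear_combination h

end Lattice

theorem eq_comp_pow_of_succ_eq_comp {R M N : Type*} [Semiring R] [AddCommMonoid M]
    [Module R M] [AddCommMonoid N] [Module R N] (T : Module.End R M) (g : ℕ → M →ₗ[R] N)
    (h : ∀ k, 1 ≤ k → g (k + 1) = g k ∘ₗ T) : ∀ k, 1 ≤ k → g k = g 1 ∘ₗ T ^ (k - 1) := by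
  intro k hk
  induction k, hk using Nat.le_induction with
  | base => rw [Nat.sub_self, pow_zero, Module.End.one_eq_id, LinearMap.comp_id]
  | succ k hk ih =>
    rw [h k hk, ih, Nat.add_sub_cancel, LinearMap.comp_assoc, ← Module.End.mul_eq_comp,
      pow_sub_one_mul (by omega)]

section Components

variable {m b} {F : Dspace m b →ₗ[ℂ] Km m}

lemma pib_zMul_eq (hF : ∀ w, F w ∈ Lbminus m b) {f1 : Dspace m b →ₗ[ℂ] Km m}
    (hV : ∀ w, f1 w ∈ Vb m b)
    (hc : ∀ w i, ((F w) i).coeff (-(b i : ℤ) - 1) = ((f1 w) i).coeff (-(b i : ℤ)))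
    (w : Dspace m b) : pib m b (zMul m (F w)) = f1 w := by
  funext i; ext d
  rw [pib_coeff]
  split_ifs with hd
  · rw [zMul_coeff]
    by_cases hdb : d = -(b i : ℤ)
    · rw [hdb, hc]
    · rw [hF w i (d - 1) (by omega), hV w i d hdb]
  · rw [hV w i d (by omega)]

lemma comp_succ_eq {fk : ℕ → Dspace m b →ₗ[ℂ] Km m} (hV : ∀ k w, fk k w ∈ Vb m b)
    (hc : ∀ (w : Dspace m b) (i : Fin m) (k : ℕ), 1 ≤ k →
      ((F w) i).coeff (-(b i : ℤ) - (k : ℤ)) = ((fk k w) i).coeff (-(b i : ℤ)))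
    {T : Module.End ℂ (Dspace m b)} (hT : ∀ w, F (T w) = zMul m (F w) - fk 1 w)
    {k : ℕ} (hk : 1 ≤ k) : fk (k + 1) = fk k ∘ₗ T := by
  refine LinearMap.ext fun w => Vb_ext (hV _ _) (hV _ _) fun i => ?_
  rw [LinearMap.comp_apply, ← hc w i (k + 1) (by omega), ← hc (T w) i k hk, hT w,
    Pi.sub_apply, HahnSeries.coeff_sub, zMul_coeff, hV 1 w i _ (by omega), sub_zero]
  congr 1
  push_cast
  ring

end Components

/-- Encoding: `L` is a `ℂ`-subspace stable under multiplication by `z` and sandwiched between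
`z^r O^m` and `z^{−r} O^m` (equivalent to being an `O`-lattice); a map `f : L_b → L_b^−`
killing `L_0` is encoded by the (unique) linear map `F : D = L_b/L_0 → L_b^−` with
`f = F ∘ (quotient map)`, the quotient map `L_b → D` being `toD`; the decomposition
`f(u) = Σ_{k≥1} z^{−k} ι(f_k(ū))` is encoded coefficient-wise (the `k`-th summand being
the part of degree `−b_i − k` in coordinate `i`); and (iii) is stated pointwise on `L`,
the induced map `L/L_0 → D` being `v + L_0 ↦ toD v` (its bijectivity is the conjunction
of the last two clauses). -/
theorem stmt11
    (L : Submodule ℂ (Km m))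
    (hLz : ∀ v ∈ L, zMul m v ∈ L)
    (hLsand : ∃ r : ℕ, (∀ v ∈ L0 m, (zK ^ r) • v ∈ L) ∧ (∀ v ∈ L, (zK ^ r) • v ∈ L0 m))
    (hL0L : L0 m ≤ L)
    (hbij : Set.BijOn (pib m b) (L : Set (Km m)) ((Lb m b : Submodule ℂ (Km m)) : Set (Km m))) :
    (∃! F : Dspace m b →ₗ[ℂ] Km m,
      (∀ w, F w ∈ Lbminus m b) ∧
      (L : Set (Km m)) = (fun u => u + F (toD m b u)) '' ((Lb m b : Submodule ℂ (Km m)) : Set (Km m)))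
    ∧ (∀ F : Dspace m b →ₗ[ℂ] Km m,
        (∀ w, F w ∈ Lbminus m b) →
        (L : Set (Km m)) = (fun u => u + F (toD m b u)) '' ((Lb m b : Submodule ℂ (Km m)) : Set (Km m)) →
        ∀ fk : ℕ → (Dspace m b →ₗ[ℂ] Km m),
          (∀ k w, fk k w ∈ Vb m b) →
          (∀ (w : Dspace m b) (i : Fin m) (k : ℕ), 1 ≤ k →
            ((F w) i).coeff (-(b i : ℤ) - (k : ℤ)) = ((fk k w) i).coeff (-(b i : ℤ))) →
          ((∀ k : ℕ, 1 ≤ k →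
              fk k = (fk 1) ∘ₗ
                (((zbar m b + fhat m b (fk 1)) ^ (k - 1) : Module.End ℂ (Dspace m b))
                  : Dspace m b →ₗ[ℂ] Dspace m b))
            ∧ IsNilpotent (zbar m b + fhat m b (fk 1))
            ∧ (∀ v ∈ L, toD m b (zMul m v) = (zbar m b + fhat m b (fk 1)) (toD m b v))
            ∧ (∀ w : Dspace m b, ∃ v ∈ L, toD m b v = w)
            ∧ (∀ v ∈ L, toD m b v = 0 → v ∈ L0 m))) := by
  refine ⟨?_, fun F hF hL fk hV hc => ?_⟩
  · obtain ⟨F, hF, hL⟩ := exists_graph_eq hL0L hbij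
    exact ⟨F, ⟨hF, hL⟩, fun F' ⟨hF', hL'⟩ => graph_injective hF' hF (hL'.symm.trans hL)⟩
  have h1 : ∀ w, pib m b (zMul m (F w)) = fk 1 w :=
    pib_zMul_eq hF (hV 1) fun w i => by simpa using hc w i 1 le_rfl
  obtain ⟨r, -, hr⟩ := hLsand
  exact ⟨eq_comp_pow_of_succ_eq_comp _ fk fun _ hk =>
      comp_succ_eq hV hc (apply_zbar_add_fhat hF hL h1 hLz) hk,
    isNilpotent_zbar_add_fhat hF hL h1 hLz hr,
    fun _ hv => toD_zMul_of_mem hF hL h1 hv,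
    exists_mem_toD_eq hF hL,
    fun _ hv => mem_L0_of_toD_eq_zero hF hL hv⟩

end

end GrassA
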